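/- Let X be a nonempty compact Hausdorff space, φ : X → X a homeomorphism, and x ∈ X aperiodic. Then the collection of closed subspaces of ℓ²(ℕ, ℂ) that are invariant under the unilateral shift S and under π_x(f) for every f ∈ C(X, ℂ) is totally ordered by inclusion; indeed these subspaces are exactly {0}, ℓ²(ℕ), and the subspaces {z ∈ ℓ²(ℕ) : zₙ = 0 for all n ≤ N} for N ≥ 1. In particular the representation π_x is a nest representation. -/

import Mathlib

open scoped ENNReal

section DiagOp

variable {I : Type*}

theorem diag_pointwise_bound {d : I → ℂ} {C : ℝ} (hC : ∀ i, ‖d i‖ ≤ C)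
    (z : I → ℂ) (i : I) :
    ‖d i * z i‖ ^ (2 : ℝ≥0∞).toReal ≤
      (max C 0) ^ (2 : ℝ≥0∞).toReal * ‖z i‖ ^ (2 : ℝ≥0∞).toReal := by
  calc ‖d i * z i‖ ^ (2 : ℝ≥0∞).toReal
      = (‖d i‖ * ‖z i‖) ^ (2 : ℝ≥0∞).toReal := by rw [norm_mul]
    _ ≤ (max C 0 * ‖z i‖) ^ (2 : ℝ≥0∞).toReal :=
        Real.rpow_le_rpow (by positivity)
          (mul_le_mul_of_nonneg_right ((hC i).trans (le_max_left _ _)) (norm_nonneg _))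
          (by norm_num)
    _ = _ := Real.mul_rpow (le_max_right C 0) (norm_nonneg _)

theorem memℓp_diag_mul {d : I → ℂ} {C : ℝ} (hC : ∀ i, ‖d i‖ ≤ C)
    (z : lp (fun _ : I => ℂ) 2) : Memℓp (fun i => d i * z i) 2 := by
  have h2 : (0 : ℝ) < (2 : ℝ≥0∞).toReal := by norm_num
  apply memℓp_gen
  have hs : Summable fun i => (max C 0) ^ (2 : ℝ≥0∞).toReal * ‖z i‖ ^ (2 : ℝ≥0∞).toReal :=
    ((lp.memℓp z).summable h2).mul_left _
  exact hs.of_nonneg_of_le (fun i => Real.rpow_nonneg (norm_nonneg _) _)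
    (fun i => diag_pointwise_bound hC (⇑z) i)

/-- The diagonal operator on `ℓ²(I, ℂ)` with diagonal entries `d i`, bounded by `C`. -/
noncomputable def diagOp (d : I → ℂ) (C : ℝ) (hC : ∀ i, ‖d i‖ ≤ C) :
    lp (fun _ : I => ℂ) 2 →L[ℂ] lp (fun _ : I => ℂ) 2 :=
  LinearMap.mkContinuous
    { toFun := fun z => (⟨fun i => d i * z i, memℓp_diag_mul hC z⟩ : lp (fun _ : I => ℂ) 2)
      map_add' := fun z w => Subtype.ext (funext fun i => mul_add (d i) (z i) (w i))
      map_smul' := fun c z => Subtype.ext (funext fun i => mul_left_comm (d i) c (z i)) }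
    (max C 0)
    (fun z => by
      have h2 : (0 : ℝ) < (2 : ℝ≥0∞).toReal := by norm_num
      apply lp.norm_le_of_tsum_le h2 (by positivity)
      calc (∑' i, ‖d i * z i‖ ^ (2 : ℝ≥0∞).toReal)
          ≤ ∑' i, (max C 0) ^ (2 : ℝ≥0∞).toReal * ‖z i‖ ^ (2 : ℝ≥0∞).toReal :=
            Summable.tsum_le_tsum (fun i => diag_pointwise_bound hC (⇑z) i)
              (((memℓp_diag_mul hC z).summable h2))
              (((lp.memℓp z).summable h2).mul_left _)
        _ = (max C 0) ^ (2 : ℝ≥0∞).toReal * ∑' i, ‖z i‖ ^ (2 : ℝ≥0∞).toReal :=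
            tsum_mul_left
        _ = (max C 0) ^ (2 : ℝ≥0∞).toReal * ‖z‖ ^ (2 : ℝ≥0∞).toReal := by
            rw [lp.norm_rpow_eq_tsum h2]
        _ = (max C 0 * ‖z‖) ^ (2 : ℝ≥0∞).toReal :=
            (Real.mul_rpow (by positivity) (norm_nonneg _)).symm)

@[simp] theorem diagOp_apply (d : I → ℂ) (C : ℝ) (hC : ∀ i, ‖d i‖ ≤ C)
    (z : lp (fun _ : I => ℂ) 2) (i : I) : diagOp d C hC z i = d i * z i := rfl

end DiagOp

section Shift

/-- The underlying sequence map of the unilateral shift: `(z₁, z₂, …) ↦ (0, z₁, z₂, …)`. -/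
def shiftSeq (z : ℕ → ℂ) : ℕ → ℂ
  | 0 => 0
  | n + 1 => z n

theorem memℓp_shiftSeq (z : lp (fun _ : ℕ => ℂ) 2) : Memℓp (shiftSeq ⇑z) 2 := by
  have h2 : (0 : ℝ) < (2 : ℝ≥0∞).toReal := by norm_num
  apply memℓp_gen
  exact (summable_nat_add_iff 1).mp ((lp.memℓp z).summable h2)

theorem tsum_shiftSeq (z : lp (fun _ : ℕ => ℂ) 2) :
    ∑' n, ‖shiftSeq (⇑z) n‖ ^ (2 : ℝ≥0∞).toReal = ∑' n, ‖z n‖ ^ (2 : ℝ≥0∞).toReal := by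
  have h2 : (0 : ℝ) < (2 : ℝ≥0∞).toReal := by norm_num
  have hs : Summable fun n => ‖shiftSeq (⇑z) n‖ ^ (2 : ℝ≥0∞).toReal :=
    (summable_nat_add_iff 1).mp ((lp.memℓp z).summable h2)
  rw [hs.tsum_eq_zero_add]
  simp only [shiftSeq, norm_zero]
  rw [Real.zero_rpow h2.ne', zero_add]

/-- The unilateral shift `S` on `ℓ²(ℕ, ℂ)`: `S(z₁, z₂, …) = (0, z₁, z₂, …)`. -/
noncomputable def shiftOp : lp (fun _ : ℕ => ℂ) 2 →L[ℂ] lp (fun _ : ℕ => ℂ) 2 :=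
  LinearMap.mkContinuous
    { toFun := fun z => (⟨shiftSeq ⇑z, memℓp_shiftSeq z⟩ : lp (fun _ : ℕ => ℂ) 2)
      map_add' := fun z w => Subtype.ext (funext fun n => by
        cases n with
        | zero => exact (add_zero 0).symm
        | succ k => rfl)
      map_smul' := fun c z => Subtype.ext (funext fun n => by
        cases n with
        | zero => exact (smul_zero c).symm
        | succ k => rfl) }
    1
    (fun z => by
      have h2 : (0 : ℝ) < (2 : ℝ≥0∞).toReal := by norm_num
      apply lp.norm_le_of_tsum_le h2 (by positivity)
      calc (∑' n, ‖shiftSeq (⇑z) n‖ ^ (2 : ℝ≥0∞).toReal)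
          = ∑' n, ‖z n‖ ^ (2 : ℝ≥0∞).toReal := tsum_shiftSeq z
        _ = ‖z‖ ^ (2 : ℝ≥0∞).toReal := (lp.norm_rpow_eq_tsum h2 z).symm
        _ = (1 * ‖z‖) ^ (2 : ℝ≥0∞).toReal := by rw [one_mul]
        _ ≤ (1 * ‖z‖) ^ (2 : ℝ≥0∞).toReal := le_rfl)

@[simp] theorem shiftOp_apply_zero (z : lp (fun _ : ℕ => ℂ) 2) : shiftOp z 0 = 0 := rfl

@[simp] theorem shiftOp_apply_succ (z : lp (fun _ : ℕ => ℂ) 2) (n : ℕ) :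
    shiftOp z (n + 1) = z n := rfl

end Shift

/-- The orbit representation `π_x(f)`: the diagonal operator on `ℓ²(ℕ, ℂ)` with entries
`f (φ^[n] x)`, i.e. `(π_x(f)z)ₙ = f(φ^{n-1}(x))·zₙ` in 1-indexed notation. -/
noncomputable def piOp {X : Type*} [TopologicalSpace X] [CompactSpace X]
    (φ : X → X) (x : X) (f : C(X, ℂ)) :
    lp (fun _ : ℕ => ℂ) 2 →L[ℂ] lp (fun _ : ℕ => ℂ) 2 :=
  diagOp (fun n : ℕ => f (φ^[n] x)) ‖f‖ (fun n => f.norm_coe_le_norm _)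

/-- The closed subspace `{z ∈ ℓ²(ℕ, ℂ) : zₙ = 0 for n < N}` (0-indexed; in 1-indexed
notation, `zₙ = 0` for `n ≤ N`). -/
noncomputable def tailSpace (N : ℕ) : Submodule ℂ (lp (fun _ : ℕ => ℂ) 2) where
  carrier := {z | ∀ n < N, z n = 0}
  add_mem' := by
    intro a b ha hb n hn
    have h : (⇑(a + b) : ℕ → ℂ) = ⇑a + ⇑b := lp.coeFn_add a b
    simp [h, ha n hn, hb n hn]
  zero_mem' := by
    intro n hn
    have h : (⇑(0 : lp (fun _ : ℕ => ℂ) 2) : ℕ → ℂ) = 0 := lp.coeFn_zero _ _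
    simp [h]
  smul_mem' := by
    intro c z hz n hn
    have h : (⇑(c • z) : ℕ → ℂ) = c • ⇑z := lp.coeFn_smul c z
    simp [h, hz n hn]

/-- A closed subspace of `ℓ²(ℕ, ℂ)` invariant under the unilateral shift `S` and under
`π_x(f)` for every `f ∈ C(X, ℂ)`. -/
def IsInvariantSubspace {X : Type*} [TopologicalSpace X] [CompactSpace X]
    (φ : X → X) (x : X) (K : Submodule ℂ (lp (fun _ : ℕ => ℂ) 2)) : Prop :=
  IsClosed (K : Set (lp (fun _ : ℕ => ℂ) 2)) ∧
  (∀ z ∈ K, shiftOp z ∈ K) ∧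
  (∀ f : C(X, ℂ), ∀ z ∈ K, piOp φ x f z ∈ K)


section NestProof

open Filter Topology Set

lemma lp2_continuous_eval (n : ℕ) : Continuous fun z : lp (fun _ : ℕ => ℂ) 2 => z n := by
  refine (LipschitzWith.mk_one fun z w => ?_).continuous
  rw [dist_eq_norm, dist_eq_norm]
  have h1 : z n - w n = (z - w) n := by rw [lp.coeFn_sub]; rfl
  rw [h1]
  exact lp.norm_apply_le_norm (by norm_num) (z - w) n

lemma mem_tailSpace {N : ℕ} {z : lp (fun _ : ℕ => ℂ) 2} :
    z ∈ tailSpace N ↔ ∀ n < N, z n = 0 := Iff.rfl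

lemma tailSpace_isClosed (N : ℕ) :
    IsClosed ((tailSpace N : Submodule ℂ (lp (fun _ : ℕ => ℂ) 2)) : Set (lp (fun _ : ℕ => ℂ) 2)) := by
  have h : ((tailSpace N : Submodule ℂ (lp (fun _ : ℕ => ℂ) 2)) : Set (lp (fun _ : ℕ => ℂ) 2)) =
      ⋂ (n : ℕ) (_ : n < N), (fun z : lp (fun _ : ℕ => ℂ) 2 => z n) ⁻¹' {0} := by
    ext z
    simp only [SetLike.mem_coe, mem_tailSpace, Set.mem_iInter, Set.mem_preimage,
      Set.mem_singleton_iff]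
  rw [h]
  exact isClosed_iInter fun n => isClosed_iInter fun _ =>
    isClosed_singleton.preimage (lp2_continuous_eval n)

@[simp] lemma piOp_apply {X : Type*} [TopologicalSpace X] [CompactSpace X]
    (φ : X → X) (x : X) (f : C(X, ℂ)) (z : lp (fun _ : ℕ => ℂ) 2) (n : ℕ) :
    piOp φ x f z n = f (φ^[n] x) * z n := rfl

lemma tailSpace_invariant {X : Type*} [TopologicalSpace X] [CompactSpace X]
    (φ : X → X) (x : X) (N : ℕ) : IsInvariantSubspace φ x (tailSpace N) := by
  refine ⟨tailSpace_isClosed N, ?_, ?_⟩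
  · intro z hz n hn
    cases n with
    | zero => exact shiftOp_apply_zero z
    | succ k => exact (shiftOp_apply_succ z k).trans (hz k (Nat.lt_of_succ_lt hn))
  · intro f z hz n hn
    rw [piOp_apply, hz n hn, mul_zero]

lemma bot_invariant {X : Type*} [TopologicalSpace X] [CompactSpace X]
    (φ : X → X) (x : X) : IsInvariantSubspace φ x (⊥ : Submodule ℂ (lp (fun _ : ℕ => ℂ) 2)) := by
  refine ⟨?_, ?_, ?_⟩
  · rw [Submodule.bot_coe]; exact isClosed_singleton
  · intro z hz
    rw [Submodule.mem_bot] at hz ⊢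
    rw [hz, map_zero]
  · intro f z hz
    rw [Submodule.mem_bot] at hz ⊢
    rw [hz, map_zero]

lemma tailSpace_zero : (tailSpace 0 : Submodule ℂ (lp (fun _ : ℕ => ℂ) 2)) = ⊤ := by
  ext z
  simp [mem_tailSpace]

lemma tailSpace_mono {M N : ℕ} (h : M ≤ N) :
    (tailSpace N : Submodule ℂ (lp (fun _ : ℕ => ℂ) 2)) ≤ tailSpace M :=
  fun _ hz n hn => hz n (lt_of_lt_of_le hn h)

lemma lp_single_zero (n : ℕ) : lp.single 2 n (0 : ℂ) = (0 : lp (fun _ : ℕ => ℂ) 2) := by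
  apply lp.ext
  funext k
  have hz : (0 : lp (fun _ : ℕ => ℂ) 2) k = 0 := by rw [lp.coeFn_zero]; rfl
  rcases eq_or_ne k n with rfl | hk
  · rw [lp.single_apply_self, hz]
  · rw [lp.single_apply_ne (E := fun _ : ℕ => ℂ) 2 n (0:ℂ) hk, hz]

lemma shiftOp_single (n : ℕ) (c : ℂ) :
    shiftOp (lp.single 2 n c) = lp.single 2 (n + 1) c := by
  apply lp.ext
  funext k
  cases k with
  | zero =>
    rw [shiftOp_apply_zero]
    exact (lp.single_apply_ne (E := fun _ : ℕ => ℂ) 2 (n+1) c (Nat.succ_ne_zero n).symm).symm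
  | succ k =>
    rw [shiftOp_apply_succ]
    rcases eq_or_ne k n with rfl | hk
    · rw [lp.single_apply_self, lp.single_apply_self]
    · rw [lp.single_apply_ne (E := fun _ : ℕ => ℂ) 2 n c hk,
        lp.single_apply_ne (E := fun _ : ℕ => ℂ) 2 (n+1) c (fun h => hk (Nat.succ_injective h))]

lemma orbit_inj {X : Type*} [TopologicalSpace X] (φ : X ≃ₜ X) (x : X)
    (hx : ∀ n : ℕ, 1 ≤ n → (⇑φ)^[n] x ≠ x) :
    Function.Injective fun n : ℕ => (⇑φ)^[n] x := by
  have key : ∀ a b : ℕ, a < b → (⇑φ)^[a] x ≠ (⇑φ)^[b] x := by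
    intro a b hab h
    have hb : a + (b - a) = b := Nat.add_sub_cancel' hab.le
    have h2 : (⇑φ)^[a] ((⇑φ)^[b-a] x) = (⇑φ)^[a] x := by
      rw [← Function.iterate_add_apply, hb]
      exact h.symm
    have h3 : (⇑φ)^[b-a] x = x := (φ.injective.iterate a) h2
    exact hx _ (Nat.one_le_iff_ne_zero.mpr (Nat.sub_ne_zero_of_lt hab)) h3
  intro a b h
  rcases lt_trichotomy a b with h' | h' | h'
  · exact absurd h (key a b h')
  · exact h'
  · exact absurd h.symm (key b a h')

lemma exists_bump {X : Type*} [TopologicalSpace X] [CompactSpace X] [T2Space X]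
    (φ : X ≃ₜ X) (x : X) (hinj : Function.Injective fun n : ℕ => (⇑φ)^[n] x)
    (m M : ℕ) : ∃ f : C(X, ℂ), f ((⇑φ)^[m] x) = 1 ∧
      (∀ n, n ≤ M → n ≠ m → f ((⇑φ)^[n] x) = 0) ∧ ∀ y, ‖f y‖ ≤ 1 := by
  set s : Set X := (fun n : ℕ => (⇑φ)^[n] x) '' {n | n ≤ M ∧ n ≠ m} with hsdef
  have hsfin : s.Finite :=
    Set.Finite.image _ ((Set.finite_Iic M).subset fun n hn => hn.1)
  have hs : IsClosed s := hsfin.isClosed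
  have ht : IsClosed ({(⇑φ)^[m] x} : Set X) := isClosed_singleton
  have hd : Disjoint s {(⇑φ)^[m] x} := by
    rw [Set.disjoint_singleton_right]
    rintro ⟨n, ⟨-, hnm⟩, hn⟩
    exact hnm (hinj hn)
  obtain ⟨g, hg0, hg1, hg01⟩ := exists_continuous_zero_one_of_isClosed hs ht hd
  refine ⟨⟨fun y => (g y : ℂ), Complex.continuous_ofReal.comp g.continuous⟩, ?_, ?_, ?_⟩
  · show ((g ((⇑φ)^[m] x) : ℝ) : ℂ) = 1
    have h := hg1 (Set.mem_singleton _)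
    simp only [Pi.one_apply] at h
    rw [h, Complex.ofReal_one]
  · intro n hn hne
    show ((g ((⇑φ)^[n] x) : ℝ) : ℂ) = 0
    have h := hg0 ⟨n, ⟨hn, hne⟩, rfl⟩
    simp only [Pi.zero_apply] at h
    rw [h, Complex.ofReal_zero]
  · intro y
    show ‖((g y : ℝ) : ℂ)‖ ≤ 1
    rw [Complex.norm_real, Real.norm_eq_abs, abs_le]
    exact ⟨by linarith [(hg01 y).1], (hg01 y).2⟩

set_option maxHeartbeats 1000000 in
lemma single_coord_mem {X : Type*} [TopologicalSpace X] [CompactSpace X] [T2Space X]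
    (φ : X ≃ₜ X) (x : X) (hx : ∀ n : ℕ, 1 ≤ n → (⇑φ)^[n] x ≠ x)
    {K : Submodule ℂ (lp (fun _ : ℕ => ℂ) 2)} (hK : IsInvariantSubspace ⇑φ x K)
    {z : lp (fun _ : ℕ => ℂ) 2} (hz : z ∈ K) (m : ℕ) : lp.single 2 m (z m) ∈ K := by
  have hinj : Function.Injective fun n : ℕ => (⇑φ)^[n] x := orbit_inj φ x hx
  choose f hf1 hf2 hf3 using fun M : ℕ => exists_bump φ x hinj m M
  have h2 : (0:ℝ) < (2 : ℝ≥0∞).toReal := by norm_num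
  have hmem : ∀ M, piOp (⇑φ) x (f M) z ∈ K := fun M => hK.2.2 (f M) z hz
  have key : ∀ M : ℕ, m ≤ M →
      ‖piOp (⇑φ) x (f M) z - lp.single 2 m (z m)‖ ≤
        (∑' k, ‖z (k + (M+1))‖ ^ (2 : ℝ≥0∞).toReal) ^ ((2 : ℝ≥0∞).toReal)⁻¹ := by
    intro M hM
    set w : lp (fun _ : ℕ => ℂ) 2 := piOp (⇑φ) x (f M) z - lp.single 2 m (z m) with hw
    have hcoe : ∀ i, w i = f M ((⇑φ)^[i] x) * z i
        - (lp.single 2 m (z m) : lp (fun _ : ℕ => ℂ) 2) i := by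
      intro i
      rw [hw, lp.coeFn_sub]
      rfl
    have hw0 : ∀ i, i ≤ M → w i = 0 := by
      intro i hi
      rcases eq_or_ne i m with rfl | hne
      · rw [hcoe, hf1 M, one_mul, lp.single_apply_self, sub_self]
      · rw [hcoe, hf2 M i hi hne, zero_mul, lp.single_apply_ne 2 m _ hne, sub_zero]
    have hwle : ∀ i, M < i → ‖w i‖ ≤ ‖z i‖ := by
      intro i hi
      have hne : i ≠ m := by omega
      have hc := hcoe i
      rw [lp.single_apply_ne 2 m _ hne, sub_zero] at hc
      rw [hc, norm_mul]
      calc ‖f M ((⇑φ)^[i] x)‖ * ‖z i‖ ≤ 1 * ‖z i‖ :=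
            mul_le_mul_of_nonneg_right (hf3 M _) (norm_nonneg _)
        _ = ‖z i‖ := one_mul _
    have hsumw : Summable fun i => ‖w i‖ ^ (2 : ℝ≥0∞).toReal := (lp.memℓp w).summable h2
    have hsumz : Summable fun k => ‖z (k + (M+1))‖ ^ (2 : ℝ≥0∞).toReal :=
      (summable_nat_add_iff (M+1)).mpr ((lp.memℓp z).summable h2)
    have hnorm : ‖w‖ ^ (2 : ℝ≥0∞).toReal = ∑' i, ‖w i‖ ^ (2 : ℝ≥0∞).toReal :=
      lp.norm_rpow_eq_tsum h2 w
    have hsplit : ∑' i, ‖w i‖ ^ (2 : ℝ≥0∞).toReal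
        = ∑' k, ‖w (k + (M+1))‖ ^ (2 : ℝ≥0∞).toReal := by
      rw [← hsumw.sum_add_tsum_nat_add (M+1)]
      have hzero : ∑ i ∈ Finset.range (M+1), ‖w i‖ ^ (2 : ℝ≥0∞).toReal = 0 :=
        Finset.sum_eq_zero fun i hi => by
          rw [hw0 i (Nat.lt_succ_iff.mp (Finset.mem_range.mp hi)), norm_zero,
            Real.zero_rpow h2.ne']
      rw [hzero, zero_add]
    have hle : ∑' k, ‖w (k + (M+1))‖ ^ (2 : ℝ≥0∞).toReal
        ≤ ∑' k, ‖z (k + (M+1))‖ ^ (2 : ℝ≥0∞).toReal :=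
      Summable.tsum_le_tsum
        (fun k => Real.rpow_le_rpow (norm_nonneg _) (hwle _ (by omega)) h2.le)
        ((summable_nat_add_iff (M+1)).mpr hsumw) hsumz
    have hfin : ‖w‖ ^ (2 : ℝ≥0∞).toReal ≤ ∑' k, ‖z (k + (M+1))‖ ^ (2 : ℝ≥0∞).toReal := by
      rw [hnorm, hsplit]; exact hle
    calc ‖w‖ = (‖w‖ ^ (2 : ℝ≥0∞).toReal) ^ ((2 : ℝ≥0∞).toReal)⁻¹ :=
          (Real.rpow_rpow_inv (norm_nonneg _) h2.ne').symm
      _ ≤ (∑' k, ‖z (k + (M+1))‖ ^ (2 : ℝ≥0∞).toReal) ^ ((2 : ℝ≥0∞).toReal)⁻¹ :=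
          Real.rpow_le_rpow (by positivity) hfin (by positivity)
  have hEinv : (0:ℝ) < ((2 : ℝ≥0∞).toReal)⁻¹ := by positivity
  have hbound : Tendsto
      (fun M : ℕ => (∑' k, ‖z (k + (M+1))‖ ^ (2 : ℝ≥0∞).toReal) ^ ((2 : ℝ≥0∞).toReal)⁻¹)
      atTop (𝓝 0) := by
    have h1 : Tendsto (fun M : ℕ => ∑' k, ‖z (k + (M+1))‖ ^ (2 : ℝ≥0∞).toReal)
        atTop (𝓝 0) :=
      (tendsto_sum_nat_add (fun i => ‖z i‖ ^ (2 : ℝ≥0∞).toReal)).comp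
        (tendsto_add_atTop_nat 1)
    have h3 := h1.rpow_const (p := ((2 : ℝ≥0∞).toReal)⁻¹) (Or.inr hEinv.le)
    rwa [Real.zero_rpow hEinv.ne'] at h3
  have htt : Tendsto (fun M => piOp (⇑φ) x (f M) z) atTop (𝓝 (lp.single 2 m (z m))) := by
    rw [tendsto_iff_norm_sub_tendsto_zero]
    exact squeeze_zero' (Eventually.of_forall fun M => norm_nonneg _)
      (eventually_atTop.mpr ⟨m, fun M hM => key M hM⟩) hbound
  exact hK.1.mem_of_tendsto htt (Eventually.of_forall hmem)

lemma tailSpace_le_of_single {X : Type*} [TopologicalSpace X] [CompactSpace X]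
    (φ : X → X) (x : X) {K : Submodule ℂ (lp (fun _ : ℕ => ℂ) 2)}
    (hK : IsInvariantSubspace φ x K) {N : ℕ}
    (hN : lp.single 2 N (1:ℂ) ∈ K) : tailSpace N ≤ K := by
  have hiter : ∀ k, lp.single 2 (N + k) (1:ℂ) ∈ K := by
    intro k
    induction k with
    | zero => exact hN
    | succ k ih =>
      have h := hK.2.1 _ ih
      rwa [shiftOp_single] at h
  have hall : ∀ n, N ≤ n → lp.single 2 n (1:ℂ) ∈ K := by
    intro n hn
    obtain ⟨k, rfl⟩ := Nat.exists_eq_add_of_le hn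
    exact hiter k
  intro z hz
  have hterm : ∀ n, lp.single 2 n (z n) ∈ K := by
    intro n
    rcases lt_or_ge n N with hn | hn
    · rw [mem_tailSpace.mp hz n hn, lp_single_zero]
      exact K.zero_mem
    · have hsm : (z n) • (1:ℂ) = z n := by simp
      rw [← hsm, lp.single_smul]
      exact K.smul_mem _ (hall n hn)
  have hsum := lp.hasSum_single (E := fun _ : ℕ => ℂ) (by norm_num : (2:ℝ≥0∞) ≠ ⊤) z
  exact hK.1.mem_of_tendsto hsum
    (Filter.Eventually.of_forall fun s => K.sum_mem fun n _ => hterm n)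

lemma classify {X : Type*} [TopologicalSpace X] [CompactSpace X] [T2Space X]
    (φ : X ≃ₜ X) (x : X) (hx : ∀ n : ℕ, 1 ≤ n → (⇑φ)^[n] x ≠ x)
    {K : Submodule ℂ (lp (fun _ : ℕ => ℂ) 2)} (hK : IsInvariantSubspace ⇑φ x K)
    (hKbot : K ≠ ⊥) : ∃ N : ℕ, K = tailSpace N := by
  classical
  have hP : ∃ m : ℕ, ∃ z, z ∈ K ∧ z m ≠ 0 := by
    obtain ⟨z, hzK, hz0⟩ := (Submodule.ne_bot_iff K).mp hKbot
    by_contra h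
    push_neg at h
    refine hz0 (lp.ext (funext fun m => ?_))
    simp [lp.coeFn_zero, h m z hzK]
  obtain ⟨z, hzK, hzN⟩ := Nat.find_spec hP
  set N := Nat.find hP with hNdef
  have hmin : ∀ n < N, ∀ w, w ∈ K → w n = 0 := by
    intro n hn w hw
    by_contra h
    exact Nat.find_min hP hn ⟨w, hw, h⟩
  refine ⟨N, le_antisymm (fun w hw n hn => hmin n hn w hw) (tailSpace_le_of_single ⇑φ x hK ?_)⟩
  have h1 : lp.single 2 N (z N) ∈ K := single_coord_mem φ x hx hK hzK N
  have h2 : lp.single 2 N (1:ℂ) = (z N)⁻¹ • (lp.single 2 N (z N) : lp (fun _ : ℕ => ℂ) 2) := by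
    rw [← lp.single_smul, smul_eq_mul, inv_mul_cancel₀ hzN]
  rw [h2]
  exact K.smul_mem _ h1

end NestProof

/-- For `φ` a homeomorphism of a nonempty compact Hausdorff space `X`
and `x ∈ X` aperiodic, the closed subspaces of `ℓ²(ℕ, ℂ)` invariant under the shift `S`
and all `π_x(f)` are totally ordered by inclusion; indeed they are exactly `{0}`,
`ℓ²(ℕ)`, and the subspaces `{z : zₙ = 0 for n ≤ N}` for `N ≥ 1`.  In particular `π_x`
is a nest representation. -/
theorem nest_representation_of_aperiodic
    {X : Type*} [TopologicalSpace X] [CompactSpace X] [T2Space X] [Nonempty X]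
    (φ : X ≃ₜ X) (x : X) (hx : ∀ n : ℕ, 1 ≤ n → (⇑φ)^[n] x ≠ x) :
    (∀ K L : Submodule ℂ (lp (fun _ : ℕ => ℂ) 2),
      IsInvariantSubspace ⇑φ x K → IsInvariantSubspace ⇑φ x L → K ≤ L ∨ L ≤ K) ∧
    (∀ K : Submodule ℂ (lp (fun _ : ℕ => ℂ) 2),
      IsInvariantSubspace ⇑φ x K ↔
        (K = ⊥ ∨ K = ⊤ ∨ ∃ N : ℕ, 1 ≤ N ∧ K = tailSpace N)) := by
  have hcls : ∀ K : Submodule ℂ (lp (fun _ : ℕ => ℂ) 2),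
      IsInvariantSubspace ⇑φ x K ↔
        (K = ⊥ ∨ K = ⊤ ∨ ∃ N : ℕ, 1 ≤ N ∧ K = tailSpace N) := by
    intro K
    constructor
    · intro hK
      by_cases hb : K = ⊥
      · exact Or.inl hb
      · obtain ⟨N, rfl⟩ := classify φ x hx hK hb
        rcases Nat.eq_zero_or_pos N with rfl | hpos
        · exact Or.inr (Or.inl tailSpace_zero)
        · exact Or.inr (Or.inr ⟨N, hpos, rfl⟩)
    · rintro (rfl | rfl | ⟨N, -, rfl⟩)
      · exact bot_invariant ⇑φ x
      · have h := tailSpace_invariant ⇑φ x 0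
        rwa [tailSpace_zero] at h
      · exact tailSpace_invariant ⇑φ x N
  refine ⟨?_, hcls⟩
  intro K L hK hL
  rcases (hcls K).mp hK with rfl | rfl | ⟨N, -, rfl⟩
  · exact Or.inl bot_le
  · exact Or.inr le_top
  · rcases (hcls L).mp hL with rfl | rfl | ⟨M, -, rfl⟩
    · exact Or.inr bot_le
    · exact Or.inl le_top
    · rcases le_total N M with h | h
      · exact Or.inr (tailSpace_mono h)
      · exact Or.inl (tailSpace_mono h)
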